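/- Suppose v > c_H > c_L > 0, and let λ_{10}, λ_{01}, λ_{11}, λ_{00} be nonnegative reals summing to 1 (the probabilities that only the low-cost agent can solve the task, only the high-cost agent can, both can, and neither can, respectively). Define market welfare W_M = λ_{10}(v − c_L) + λ_{01}(v − c_H) + λ_{11}(v − c_L), fixed-assignment welfares W_H = λ_{10}(−c_H) + λ_{01}(v − c_H) + λ_{11}(v − c_H) + λ_{00}(−c_H) and W_L = λ_{10}(v − c_L) + λ_{01}(−c_L) + λ_{11}(v − c_L) + λ_{00}(−c_L), and parallel-execution welfare W_P = (λ_{10} + λ_{01} + λ_{11})·v − c_H − c_L. Then W_M ≥ W_H, W_M ≥ W_L, and W_M ≥ W_P. -/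
import Mathlib


theorem stmt_0 (v cH cL l10 l01 l11 l00 : ℝ)
    (hv : v > cH) (hH : cH > cL) (hL : cL > 0)
    (h10 : 0 ≤ l10) (h01 : 0 ≤ l01) (h11 : 0 ≤ l11) (h00 : 0 ≤ l00)
    (hsum : l10 + l01 + l11 + l00 = 1) :
    let WM := l10 * (v - cL) + l01 * (v - cH) + l11 * (v - cL)
    let WH := l10 * (-cH) + l01 * (v - cH) + l11 * (v - cH) + l00 * (-cH)
    let WL := l10 * (v - cL) + l01 * (-cL) + l11 * (v - cL) + l00 * (-cL)
    let WP := (l10 + l01 + l11) * v - cH - cL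
    WM ≥ WH ∧ WM ≥ WL ∧ WM ≥ WP := by
  intro WM WH WL WP
  unfold WM WH WL WP
  refine ⟨by nlinarith, by nlinarith, by nlinarith⟩
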